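/- For the 'lifted' skew-normal skewing function Π(z,δ) = Φ(δz - ((4-π)/(6π)) δ³ z³) with Φ the standard normal c.d.f., the first derivative at δ = 0 is ψ(z) = z/√(2π) and the third derivative at δ = 0 is Υ(z) = ∂³_δ Π(z,δ)|_{δ=0} = -(2/π)^{3/2} z³ = -(8/a³) z³ with a = √(2π); consequently the z³ terms in (8/(3a³))z³ - (8/a³)z + (1/3)Υ(z) cancel, and (8/(3a³))z³ - (8/a³)z + (1/3)Υ(z) = -(8/a³) z. -/

import Mathlib

noncomputable def stdNormalPDF : ℝ → ℝ :=
  fun z => (Real.sqrt (2 * Real.pi))⁻¹ * Real.exp (-z ^ 2 / 2)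

noncomputable def stdNormalCDF : ℝ → ℝ :=
  fun z => ∫ t in Set.Iic z, stdNormalPDF t

/-- The "lifted" skew-normal skewing function. -/
noncomputable def liftedSkewing (z δ : ℝ) : ℝ :=
  stdNormalCDF (δ * z - (4 - Real.pi) / (6 * Real.pi) * δ ^ 3 * z ^ 3)

open Real MeasureTheory

noncomputable def G (z δ : ℝ) : ℝ := δ * z - (4 - π) / (6 * π) * δ ^ 3 * z ^ 3
noncomputable def G1 (z δ : ℝ) : ℝ := z - (4 - π) / (6 * π) * (3 * δ ^ 2) * z ^ 3
noncomputable def G2 (z δ : ℝ) : ℝ := -((4 - π) / (6 * π) * (6 * δ) * z ^ 3)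

lemma hG (z δ : ℝ) : HasDerivAt (G z) (G1 z δ) δ := by
  unfold G G1
  have h1 : HasDerivAt (fun x : ℝ => x * z) (1 * z) δ := (hasDerivAt_id δ).mul_const z
  have h2 : HasDerivAt (fun x : ℝ => x ^ 3) (↑(3:ℕ) * δ ^ 2) δ := hasDerivAt_pow 3 δ
  have h4 := h1.sub ((h2.const_mul ((4 - π) / (6 * π))).mul_const (z ^ 3))
  refine h4.congr_deriv ?_
  push_cast
  ring

lemma hG1 (z δ : ℝ) : HasDerivAt (G1 z) (G2 z δ) δ := by
  unfold G1 G2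
  have h2 : HasDerivAt (fun x : ℝ => x ^ 2) (↑(2:ℕ) * δ ^ 1) δ := hasDerivAt_pow 2 δ
  have h4 := (hasDerivAt_const δ z).sub
    (((h2.const_mul (3:ℝ)).const_mul ((4 - π) / (6 * π))).mul_const (z ^ 3))
  refine h4.congr_deriv ?_
  push_cast
  ring

lemma hG2 (z δ : ℝ) : HasDerivAt (G2 z) (-((4 - π) / (6 * π) * 6 * z ^ 3)) δ := by
  unfold G2
  have h1 : HasDerivAt (fun x : ℝ => x) 1 δ := hasDerivAt_id δ
  have h2 := ((((h1.const_mul (6:ℝ)).const_mul ((4 - π) / (6 * π))).mul_const (z ^ 3))).neg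
  refine h2.congr_deriv ?_
  ring

lemma pdf_continuous : Continuous stdNormalPDF := by
  unfold stdNormalPDF
  fun_prop

lemma hpdf (x : ℝ) : HasDerivAt stdNormalPDF (-x * stdNormalPDF x) x := by
  have h1 : HasDerivAt (fun t : ℝ => -t ^ 2 / 2) (-x) x := by
    have := ((hasDerivAt_pow 2 x).neg).div_const 2
    refine this.congr_deriv ?_
    push_cast; ring
  have h2 := (h1.exp).const_mul (Real.sqrt (2 * π))⁻¹
  have heq : (fun t : ℝ => (Real.sqrt (2 * π))⁻¹ * Real.exp (-t ^ 2 / 2)) = stdNormalPDF := rfl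
  rw [heq] at h2
  refine h2.congr_deriv ?_
  unfold stdNormalPDF
  ring

lemma pdf_integrable : Integrable stdNormalPDF := by
  have h : Integrable (fun t : ℝ => (Real.sqrt (2 * π))⁻¹ * Real.exp (-(1/2 : ℝ) * t ^ 2)) :=
    (integrable_exp_neg_mul_sq (by norm_num)).const_mul _
  have heq : stdNormalPDF = fun t : ℝ => (Real.sqrt (2 * π))⁻¹ * Real.exp (-(1/2:ℝ) * t ^ 2) := by
    funext t; unfold stdNormalPDF; congr 1; ring
  rw [heq]; exact h

lemma hcdf (x : ℝ) : HasDerivAt stdNormalCDF (stdNormalPDF x) x := by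
  have hint : ∀ y : ℝ, IntegrableOn stdNormalPDF (Set.Iic y) :=
    fun y => pdf_integrable.integrableOn
  have heq : ∀ y : ℝ, stdNormalCDF y =
      (∫ t in Set.Iic (0:ℝ), stdNormalPDF t) + ∫ t in (0:ℝ)..y, stdNormalPDF t := by
    intro y
    rw [← intervalIntegral.integral_Iic_sub_Iic (hint 0) (hint y)]
    simp [stdNormalCDF]
  have hii : IntervalIntegrable stdNormalPDF volume 0 x :=
    pdf_integrable.intervalIntegrable
  have hd : HasDerivAt (fun y => (∫ t in Set.Iic (0:ℝ), stdNormalPDF t)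
      + ∫ t in (0:ℝ)..y, stdNormalPDF t) (stdNormalPDF x) x := by
    have := intervalIntegral.integral_hasDerivAt_right hii
      (pdf_continuous.stronglyMeasurableAtFilter _ _)
      (pdf_continuous.continuousAt (x := x))
    exact this.const_add _
  have : stdNormalCDF = fun y => (∫ t in Set.Iic (0:ℝ), stdNormalPDF t)
      + ∫ t in (0:ℝ)..y, stdNormalPDF t := funext heq
  rw [this]
  exact hd

noncomputable def F1 (z δ : ℝ) : ℝ := stdNormalPDF (G z δ) * G1 z δ
noncomputable def F2 (z δ : ℝ) : ℝ :=
  -(G z δ) * stdNormalPDF (G z δ) * (G1 z δ) ^ 2 + stdNormalPDF (G z δ) * G2 z δ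

lemma hF (z δ : ℝ) : HasDerivAt (fun d => liftedSkewing z d) (F1 z δ) δ := by
  have : (fun d => liftedSkewing z d) = fun d => stdNormalCDF (G z d) := rfl
  rw [this]
  exact (hcdf (G z δ)).comp δ (hG z δ)

lemma hpdfG (z δ : ℝ) : HasDerivAt (fun d => stdNormalPDF (G z d))
    (-(G z δ) * stdNormalPDF (G z δ) * G1 z δ) δ :=
  (hpdf (G z δ)).comp δ (hG z δ)

lemma hF1 (z δ : ℝ) : HasDerivAt (F1 z) (F2 z δ) δ := by
  have h := (hpdfG z δ).mul (hG1 z δ)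
  have heq : ((fun d => stdNormalPDF (G z d)) * G1 z) = F1 z := rfl
  rw [heq] at h
  refine h.congr_deriv ?_
  unfold F2
  ring

lemma pdf_zero : stdNormalPDF 0 = (Real.sqrt (2 * π))⁻¹ := by
  unfold stdNormalPDF
  norm_num

lemma G_zero (z : ℝ) : G z 0 = 0 := by simp [G]
lemma G1_zero (z : ℝ) : G1 z 0 = z := by simp [G1]
lemma G2_zero (z : ℝ) : G2 z 0 = 0 := by simp [G2]

lemma sqrt2pi_pos : 0 < Real.sqrt (2 * π) := Real.sqrt_pos.mpr (by positivity)

lemma key_const : (Real.sqrt (2 * π))⁻¹ * (-1 - (4 - π) / (6 * π) * 6)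
    = -(8 / Real.sqrt (2 * π) ^ 3) := by
  have ha : Real.sqrt (2 * π) ^ 2 = 2 * π := Real.sq_sqrt (by positivity)
  have ha0 : Real.sqrt (2 * π) ≠ 0 := ne_of_gt sqrt2pi_pos
  have hpi : (π : ℝ) ≠ 0 := Real.pi_ne_zero
  set a := Real.sqrt (2 * π) with h
  have h3 : a ^ 3 = 2 * π * a := by
    rw [pow_succ, ha]
  rw [h3]
  have e1 : (-1 - (4 - π) / (6 * π) * 6 : ℝ) = -4 / π := by
    field_simp
    ring
  rw [e1]
  field_simp
  ring

lemma hF2 (z : ℝ) : HasDerivAt (F2 z) (-(8 / Real.sqrt (2 * π) ^ 3) * z ^ 3) 0 := by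
  have h1 : HasDerivAt (fun d => -(G z d)) (-(G1 z 0)) 0 := (hG z 0).neg
  have h2 := hpdfG z 0
  have h3 := h1.mul h2
  have h4 : HasDerivAt (fun d => (G1 z d) ^ 2) ((2:ℕ) * (G1 z 0) ^ 1 * G2 z 0) 0 :=
    (hG1 z 0).pow 2
  have h5 := h3.mul h4
  have h6 := h2.mul (hG2 z 0)
  have h7 := h5.add h6
  have heq : ((((fun d => -(G z d)) * fun d => stdNormalPDF (G z d)) * fun d => (G1 z d) ^ 2)
      + (fun d => stdNormalPDF (G z d)) * G2 z) = F2 z := rfl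
  rw [heq] at h7
  refine h7.congr_deriv ?_
  simp only [Pi.mul_apply]
  rw [G_zero, G1_zero, G2_zero, pdf_zero]
  push_cast
  have ha : Real.sqrt (2 * π) ^ 2 = 2 * π := Real.sq_sqrt (by positivity)
  have ha0 : Real.sqrt (2 * π) ≠ 0 := by positivity
  have hpi : (π : ℝ) ≠ 0 := Real.pi_ne_zero
  set a := Real.sqrt (2 * π) with hset
  field_simp
  linear_combination (-4 * z ^ 3) * ha

lemma deriv_lifted (z : ℝ) : deriv (fun δ => liftedSkewing z δ) = F1 z :=
  funext fun δ => (hF z δ).deriv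

lemma deriv_F1 (z : ℝ) : deriv (F1 z) = F2 z :=
  funext fun δ => (hF1 z δ).deriv

lemma third_deriv (z : ℝ) : iteratedDeriv 3 (fun δ => liftedSkewing z δ) 0
    = -(8 / Real.sqrt (2 * π) ^ 3) * z ^ 3 := by
  rw [show (3:ℕ) = 2 + 1 from rfl, iteratedDeriv_succ,
    show (2:ℕ) = 1 + 1 from rfl, iteratedDeriv_succ, iteratedDeriv_one,
    deriv_lifted, deriv_F1]
  exact (hF2 z).deriv

lemma rpow_eq : (2 / π) ^ ((3:ℝ) / 2) = 8 / Real.sqrt (2 * π) ^ 3 := by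
  have hpi : (0:ℝ) < π := Real.pi_pos
  have hb : (0:ℝ) ≤ 2 / π := by positivity
  have ha : Real.sqrt (2 * π) ^ 2 = 2 * π := Real.sq_sqrt (by positivity)
  have ha0 : Real.sqrt (2 * π) ≠ 0 := ne_of_gt sqrt2pi_pos
  set a := Real.sqrt (2 * π) with hadef
  have hL : (0:ℝ) ≤ (2 / π) ^ ((3:ℝ) / 2) := Real.rpow_nonneg hb _
  have hR : (0:ℝ) < 8 / a ^ 3 := by positivity
  have h6 : a ^ 6 = (2 * π) ^ 3 := by
    rw [show (6:ℕ) = 2 * 3 from rfl, pow_mul, ha]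
  have hsq : ((2 / π) ^ ((3:ℝ) / 2)) ^ 2 = (8 / a ^ 3) ^ 2 := by
    rw [← Real.rpow_natCast ((2 / π) ^ ((3:ℝ)/2)) 2, ← Real.rpow_mul hb]
    norm_num
    field_simp
    linear_combination 8 * h6
  calc (2 / π) ^ ((3:ℝ) / 2) = Real.sqrt (((2 / π) ^ ((3:ℝ) / 2)) ^ 2) :=
        (Real.sqrt_sq hL).symm
    _ = Real.sqrt ((8 / a ^ 3) ^ 2) := by rw [hsq]
    _ = 8 / a ^ 3 := Real.sqrt_sq hR.le

theorem lifted_skew_normal_triple_singularity :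
    (∀ z : ℝ, deriv (fun δ => liftedSkewing z δ) 0 = z / Real.sqrt (2 * Real.pi)) ∧
    (∀ z : ℝ, iteratedDeriv 3 (fun δ => liftedSkewing z δ) 0
        = -(2 / Real.pi) ^ ((3:ℝ) / 2) * z ^ 3) ∧
    (∀ z : ℝ, iteratedDeriv 3 (fun δ => liftedSkewing z δ) 0
        = -(8 / Real.sqrt (2 * Real.pi) ^ 3) * z ^ 3) ∧
    (∀ z : ℝ,
      8 / (3 * Real.sqrt (2 * Real.pi) ^ 3) * z ^ 3
          - 8 / Real.sqrt (2 * Real.pi) ^ 3 * z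
          + 1 / 3 * iteratedDeriv 3 (fun δ => liftedSkewing z δ) 0
        = -(8 / Real.sqrt (2 * Real.pi) ^ 3) * z) := by
  refine ⟨fun z => ?_, fun z => ?_, fun z => third_deriv z, fun z => ?_⟩
  · rw [deriv_lifted]
    unfold F1
    rw [G_zero, G1_zero, pdf_zero, inv_mul_eq_div]
  · rw [third_deriv, rpow_eq]
  · rw [third_deriv]
    ring
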